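/- Whether a prisoner p provably owns a configuration c changes only as follows: p loses provable ownership of c exactly when another prisoner reconfigures a room from a configuration not provably owned by p into configuration c; and p gains provable ownership of c exactly when p visits the unique room currently in configuration c, or the unique room currently in configuration c is reconfigured to another configuration. -/
import Mathlib


/-- A prisoner's observation history: the list of (configuration seen on entry,
configuration left on exit) for each of his visits so far. -/
abbrev Hist (C : Type) := List (C × C)

/-- A deterministic strategy: for each prisoner, a function from his history
and the configuration of the room he enters to the configuration he leaves the
room in, together with whether he declares. -/
abbrev Strategy (n : ℕ) (C : Type) := Fin n → Hist C → C → C × Bool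

/-- A schedule: who visits which room at each step. -/
abbrev Schedule (n r : ℕ) := ℕ → Fin n × Fin r

/-- Global state of an execution. -/
structure PState (n r : ℕ) (C : Type) where
  rooms : Fin r → C
  hist : Fin n → Hist C
  declared : Bool

/-- One visit of prisoner `v.1` to room `v.2`. -/
def pstep {n r : ℕ} {C : Type} (σ : Strategy n C) (v : Fin n × Fin r)
    (s : PState n r C) : PState n r C :=
  let cur := s.rooms v.2
  let a := σ v.1 (s.hist v.1) cur
  { rooms := Function.update s.rooms v.2 a.1
    hist := Function.update s.hist v.1 (s.hist v.1 ++ [(cur, a.1)])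
    declared := s.declared || a.2 }

/-- The state after `t` visits, starting from initial room configurations `init`. -/
def prun {n r : ℕ} {C : Type} (σ : Strategy n C) (sch : Schedule n r)
    (init : Fin r → C) : ℕ → PState n r C
  | 0 => ⟨init, fun _ => [], false⟩
  | t + 1 => pstep σ (sch t) (prun σ sch init t)

/-- A schedule is valid if every prisoner visits every room infinitely often. -/
def ValidSchedule {n r : ℕ} (sch : Schedule n r) : Prop :=
  ∀ (p : Fin n) (rm : Fin r), {t | sch t = (p, rm)}.Infinite

/-- Prisoner `p` has visited room `rm` within the first `t` visits. -/
def VisitedBy {n r : ℕ} (sch : Schedule n r) (t : ℕ) (p : Fin n) (rm : Fin r) : Prop :=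
  ∃ t' < t, sch t' = (p, rm)

/-- A strategy is winning for initial configurations `init` if under every
valid schedule some prisoner eventually declares, and every declaration occurs
only after each prisoner has visited every room at least once. -/
def Winning {n r : ℕ} {C : Type} (σ : Strategy n C) (init : Fin r → C) : Prop :=
  ∀ sch : Schedule n r, ValidSchedule sch →
    (∃ t, (prun σ sch init t).declared = true) ∧
    (∀ t, (prun σ sch init t).declared = true → ∀ p rm, VisitedBy sch t p rm)

/-- The observed history of the first `t` visits: the ordered sequence of
events "prisoner `p` entered a room in configuration `a` and left it in
configuration `b`" (room identities are not observable). -/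
def obsHist {n r : ℕ} {C : Type} (σ : Strategy n C) (sch : Schedule n r)
    (init : Fin r → C) (t : ℕ) : List (Fin n × C × C) :=
  (List.range t).map (fun t' =>
    ((sch t').1, (prun σ sch init t').rooms (sch t').2,
      (prun σ sch init (t' + 1)).rooms (sch t').2))

/-- Prisoner `p` owns configuration `c` at time `t`: he has visited every room
currently in configuration `c`. -/
def Owns {n r : ℕ} {C : Type} (σ : Strategy n C) (sch : Schedule n r)
    (init : Fin r → C) (t : ℕ) (p : Fin n) (c : C) : Prop :=
  ∀ rm : Fin r, (prun σ sch init t).rooms rm = c → VisitedBy sch t p rm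

/-- Prisoner `p` provably owns configuration `c` at time `t`: in every visit
sequence producing the same observed history, `p` owns `c` at that time. -/
def ProvablyOwns {n r : ℕ} {C : Type} (σ : Strategy n C) (sch : Schedule n r)
    (init : Fin r → C) (t : ℕ) (p : Fin n) (c : C) : Prop :=
  ∀ sch' : Schedule n r, obsHist σ sch' init t = obsHist σ sch init t →
    Owns σ sch' init t p c

section Helpers

variable {n r : ℕ} {C : Type} (σ : Strategy n C) (init : Fin r → C)

theorem prun_succ (sch : Schedule n r) (t : ℕ) :
    prun σ sch init (t + 1) = pstep σ (sch t) (prun σ sch init t) := rfl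

theorem rooms_succ (sch : Schedule n r) (t : ℕ) :
    (prun σ sch init (t + 1)).rooms =
      Function.update (prun σ sch init t).rooms (sch t).2
        ((σ (sch t).1 ((prun σ sch init t).hist (sch t).1)
          ((prun σ sch init t).rooms (sch t).2)).1) := rfl

theorem exit_eq (sch : Schedule n r) (t : ℕ) :
    (prun σ sch init (t + 1)).rooms (sch t).2 =
      (σ (sch t).1 ((prun σ sch init t).hist (sch t).1)
        ((prun σ sch init t).rooms (sch t).2)).1 := by
  rw [rooms_succ, Function.update_self]

theorem rooms_succ_ne (sch : Schedule n r) (t : ℕ) (rm : Fin r) (h : rm ≠ (sch t).2) :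
    (prun σ sch init (t + 1)).rooms rm = (prun σ sch init t).rooms rm := by
  rw [rooms_succ, Function.update_of_ne h]

theorem hist_succ (sch : Schedule n r) (t : ℕ) :
    (prun σ sch init (t + 1)).hist =
      Function.update (prun σ sch init t).hist (sch t).1
        ((prun σ sch init t).hist (sch t).1 ++
          [((prun σ sch init t).rooms (sch t).2,
            (σ (sch t).1 ((prun σ sch init t).hist (sch t).1)
              ((prun σ sch init t).rooms (sch t).2)).1)]) := rfl

theorem prun_congr (sch1 sch2 : Schedule n r) (s : ℕ)
    (h : ∀ i < s, sch1 i = sch2 i) :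
    prun σ sch1 init s = prun σ sch2 init s := by
  induction s with
  | zero => rfl
  | succ t ih =>
    have h1 : prun σ sch1 init t = prun σ sch2 init t :=
      ih (fun i hi => h i (Nat.lt_succ_of_lt hi))
    rw [prun_succ, prun_succ, h1, h t (Nat.lt_succ_self t)]

theorem obsHist_congr (sch1 sch2 : Schedule n r) (t : ℕ)
    (h : ∀ i < t, sch1 i = sch2 i) :
    obsHist σ sch1 init t = obsHist σ sch2 init t := by
  unfold obsHist
  apply List.map_congr_left
  intro i hi
  have hi' : i < t := List.mem_range.mp hi
  have e1 : prun σ sch1 init i = prun σ sch2 init i :=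
    prun_congr σ init _ _ _ (fun j hj => h j (hj.trans hi'))
  have e2 : prun σ sch1 init (i + 1) = prun σ sch2 init (i + 1) :=
    prun_congr σ init _ _ _ (fun j hj => h j (Nat.lt_of_lt_of_le hj hi'))
  rw [e1, e2, h i hi']

theorem visitedBy_congr (sch1 sch2 : Schedule n r) (t : ℕ)
    (h : ∀ i < t, sch1 i = sch2 i) (p : Fin n) (rm : Fin r) :
    VisitedBy sch1 t p rm ↔ VisitedBy sch2 t p rm := by
  constructor <;> rintro ⟨t', ht', he⟩ <;> refine ⟨t', ht', ?_⟩
  · rw [← h t' ht']; exact he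
  · rw [h t' ht']; exact he

theorem visitedBy_succ (sch : Schedule n r) (t : ℕ) (p : Fin n) (rm : Fin r) :
    VisitedBy sch (t + 1) p rm ↔ VisitedBy sch t p rm ∨ sch t = (p, rm) := by
  constructor
  · rintro ⟨t', ht', he⟩
    rcases Nat.lt_succ_iff_lt_or_eq.mp ht' with h | h
    · exact Or.inl ⟨t', h, he⟩
    · subst h; exact Or.inr he
  · rintro (⟨t', h, he⟩ | he)
    · exact ⟨t', Nat.lt_succ_of_lt h, he⟩
    · exact ⟨t, Nat.lt_succ_self t, he⟩

theorem visitedBy_mono (sch : Schedule n r) (t : ℕ) (p : Fin n) (rm : Fin r)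
    (h : VisitedBy sch t p rm) : VisitedBy sch (t + 1) p rm :=
  (visitedBy_succ sch t p rm).mpr (Or.inl h)

theorem obsHist_succ (sch : Schedule n r) (t : ℕ) :
    obsHist σ sch init (t + 1) = obsHist σ sch init t ++
      [((sch t).1, (prun σ sch init t).rooms (sch t).2,
        (prun σ sch init (t + 1)).rooms (sch t).2)] := by
  unfold obsHist
  rw [List.range_succ, List.map_append]
  rfl

theorem obsHist_succ_eq (sch sch' : Schedule n r) (t : ℕ)
    (h : obsHist σ sch' init (t + 1) = obsHist σ sch init (t + 1)) :
    obsHist σ sch' init t = obsHist σ sch init t ∧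
    (sch' t).1 = (sch t).1 ∧
    (prun σ sch' init t).rooms (sch' t).2 = (prun σ sch init t).rooms (sch t).2 ∧
    (prun σ sch' init (t + 1)).rooms (sch' t).2 =
      (prun σ sch init (t + 1)).rooms (sch t).2 := by
  rw [obsHist_succ, obsHist_succ] at h
  obtain ⟨h1, h2⟩ := List.append_inj' h rfl
  simp only [List.cons.injEq, Prod.mk.injEq, and_true] at h2
  exact ⟨h1, h2.1, h2.2.1, h2.2.2⟩

theorem hist_eq_filterMap (sch : Schedule n r) (t : ℕ) (p : Fin n) :
    (prun σ sch init t).hist p =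
      (obsHist σ sch init t).filterMap
        (fun e => if e.1 = p then some e.2 else none) := by
  induction t with
  | zero => rfl
  | succ t ih =>
    rw [obsHist_succ, List.filterMap_append, ← ih, hist_succ]
    by_cases hp : (sch t).1 = p
    · rw [hp, Function.update_self, exit_eq]
      simp [hp]
    · rw [Function.update_of_ne (fun he => hp he.symm)]
      simp [hp]

theorem hist_eq_of_obsHist_eq (sch sch' : Schedule n r) (t : ℕ)
    (h : obsHist σ sch' init t = obsHist σ sch init t) (p : Fin n) :
    (prun σ sch' init t).hist p = (prun σ sch init t).hist p := by
  rw [hist_eq_filterMap, hist_eq_filterMap, h]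

end Helpers

open Classical in
/-- Number of rooms in configuration `c`. -/
noncomputable def cnt {r : ℕ} {C : Type} (f : Fin r → C) (c : C) : ℕ :=
  (Finset.univ.filter (fun rm => f rm = c)).card

section Cnt

variable {r : ℕ} {C : Type}

open Classical in
theorem cnt_key (f : Fin r → C) (c : C) (i : Fin r) :
    cnt f c = (if f i = c then 1 else 0) +
      ∑ x ∈ ({i}ᶜ : Finset (Fin r)), (if f x = c then 1 else 0) := by
  rw [cnt, Finset.card_filter]
  exact Fintype.sum_eq_add_sum_compl i _

open Classical in
theorem cnt_update (f : Fin r → C) (i : Fin r) (a c : C) :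
    cnt (Function.update f i a) c + (if f i = c then 1 else 0)
      = cnt f c + (if a = c then 1 else 0) := by
  rw [cnt_key (Function.update f i a) c i, cnt_key f c i, Function.update_self]
  have hs : ∑ x ∈ ({i}ᶜ : Finset (Fin r)), (if Function.update f i a x = c then 1 else 0)
      = ∑ x ∈ ({i}ᶜ : Finset (Fin r)), (if f x = c then 1 else 0) := by
    apply Finset.sum_congr rfl
    intro x hx
    rw [Function.update_of_ne (by simpa using hx)]
  rw [hs]
  ring

open Classical in
theorem cnt_pos (f : Fin r → C) (c : C) (i : Fin r) (h : f i = c) : 0 < cnt f c := by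
  rw [cnt]
  exact Finset.card_pos.mpr ⟨i, Finset.mem_filter.mpr ⟨Finset.mem_univ i, h⟩⟩

open Classical in
theorem exists_of_cnt_pos (f : Fin r → C) (c : C) (h : 0 < cnt f c) : ∃ i, f i = c := by
  rw [cnt] at h
  obtain ⟨i, hi⟩ := Finset.card_pos.mp h
  exact ⟨i, (Finset.mem_filter.mp hi).2⟩

open Classical in
theorem cnt_two (f : Fin r → C) (c : C) (i j : Fin r) (hi : f i = c) (hj : f j = c)
    (hij : i ≠ j) : 1 < cnt f c := by
  rw [cnt]
  exact Finset.one_lt_card.mpr ⟨i, Finset.mem_filter.mpr ⟨Finset.mem_univ i, hi⟩,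
    j, Finset.mem_filter.mpr ⟨Finset.mem_univ j, hj⟩, hij⟩

open Classical in
theorem exists_ne_of_cnt_two (f : Fin r → C) (c : C) (i : Fin r) (h : 1 < cnt f c) :
    ∃ j ≠ i, f j = c := by
  rw [cnt] at h
  obtain ⟨j, hj, hji⟩ := Finset.exists_mem_ne h i
  exact ⟨j, hji, (Finset.mem_filter.mp hj).2⟩

open Classical in
theorem eq_of_cnt_le_one (f : Fin r → C) (c : C) (i j : Fin r) (hi : f i = c) (hj : f j = c)
    (h : cnt f c ≤ 1) : i = j := by
  rw [cnt] at h
  exact Finset.card_le_one.mp h i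
    (Finset.mem_filter.mpr ⟨Finset.mem_univ i, hi⟩)
    j (Finset.mem_filter.mpr ⟨Finset.mem_univ j, hj⟩)

end Cnt

section CntInv
open Classical

variable {n r : ℕ} {C : Type} (σ : Strategy n C) (init : Fin r → C)

theorem cnt_step (sch : Schedule n r) (t : ℕ) (c : C) :
    cnt (prun σ sch init (t + 1)).rooms c +
      (if (prun σ sch init t).rooms (sch t).2 = c then 1 else 0)
    = cnt (prun σ sch init t).rooms c +
      (if (prun σ sch init (t + 1)).rooms (sch t).2 = c then 1 else 0) := by
  rw [exit_eq σ init sch t]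
  conv_lhs => rw [rooms_succ σ init sch t]
  exact cnt_update _ _ _ _

theorem cnt_eq_of_obsHist_eq (sch sch' : Schedule n r) (t : ℕ)
    (h : obsHist σ sch' init t = obsHist σ sch init t) (c : C) :
    cnt (prun σ sch' init t).rooms c = cnt (prun σ sch init t).rooms c := by
  induction t with
  | zero => rfl
  | succ t ih =>
    obtain ⟨h0, _, hen, hex⟩ := obsHist_succ_eq σ init sch sch' t h
    have ih' := ih h0
    have s1 := cnt_step σ init sch t c
    have s2 := cnt_step σ init sch' t c
    rw [hen, hex, ih'] at s2
    omega
end CntInv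

section Modify

variable {n r : ℕ} {C : Type} (σ : Strategy n C) (init : Fin r → C)

theorem modifySch (sch sch' : Schedule n r) (t : ℕ)
    (h : obsHist σ sch' init t = obsHist σ sch init t)
    (rm' : Fin r)
    (hentry : (prun σ sch' init t).rooms rm' = (prun σ sch init t).rooms (sch t).2) :
    ∃ sch'' : Schedule n r,
      sch'' t = ((sch t).1, rm') ∧
      (∀ i < t, sch'' i = sch' i) ∧
      obsHist σ sch'' init (t + 1) = obsHist σ sch init (t + 1) ∧
      (prun σ sch'' init (t + 1)).rooms =
        Function.update (prun σ sch' init t).rooms rm'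
          ((prun σ sch init (t + 1)).rooms (sch t).2) := by
  refine ⟨fun i => if i = t then ((sch t).1, rm') else sch' i, by simp, ?_, ?_, ?_⟩
  · intro i hi; simp [Nat.ne_of_lt hi]
  all_goals {
    have hlt : ∀ i < t, (fun i => if i = t then ((sch t).1, rm') else sch' i) i = sch' i := by
      intro i hi; simp [Nat.ne_of_lt hi]
    have hpr : prun σ (fun i => if i = t then ((sch t).1, rm') else sch' i) init t
        = prun σ sch' init t := prun_congr σ init _ _ t hlt
    have hsch : (fun i => if i = t then ((sch t).1, rm') else sch' i) t = ((sch t).1, rm') := by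
      simp
    have hhist : (prun σ sch' init t).hist (sch t).1 = (prun σ sch init t).hist (sch t).1 :=
      hist_eq_of_obsHist_eq σ init sch sch' t h (sch t).1
    have hrooms : (prun σ (fun i => if i = t then ((sch t).1, rm') else sch' i) init (t + 1)).rooms =
        Function.update (prun σ sch' init t).rooms rm'
          ((prun σ sch init (t + 1)).rooms (sch t).2) := by
      rw [rooms_succ]
      simp only [reduceIte]
      rw [hpr, hentry, hhist, exit_eq σ init sch t]
    first
    | exact hrooms
    | · rw [obsHist_succ, obsHist_succ,
          obsHist_congr σ init _ sch' t hlt, h]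
        simp only [reduceIte]
        rw [hpr, hentry, hrooms, Function.update_self]
  }

end Modify

/-- Lemma: provable ownership of a configuration `c` by a
prisoner `p` changes exactly as follows. If `p` provably owns `c`, he loses
provable ownership exactly when another prisoner reconfigures a room from a
configuration not provably owned by `p` into `c`. If `p` does not provably
own `c`, he gains provable ownership exactly when the visited room is the
unique room in configuration `c` and either `p` himself visits it or it is
reconfigured to some other configuration. -/
theorem provable_ownership_change (n r : ℕ) (C : Type)
    (σ : Strategy n C) (init : Fin r → C) (sch : Schedule n r)
    (p : Fin n) (c : C) (t : ℕ) :
    -- the configuration of the visited room on entry and on exit at step `t`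
    (∀ entry exit : C,
      entry = (prun σ sch init t).rooms (sch t).2 →
      exit = (prun σ sch init (t + 1)).rooms (sch t).2 →
      ((ProvablyOwns σ sch init t p c →
          (¬ ProvablyOwns σ sch init (t + 1) p c ↔
            ((sch t).1 ≠ p ∧ exit = c ∧ entry ≠ c ∧
              ¬ ProvablyOwns σ sch init t p entry))) ∧
        (¬ ProvablyOwns σ sch init t p c →
          (ProvablyOwns σ sch init (t + 1) p c ↔
            (entry = c ∧
              (∀ rm : Fin r, (prun σ sch init t).rooms rm = c → rm = (sch t).2) ∧
              ((sch t).1 = p ∨ exit ≠ c)))))) := by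
  intro entry exit hentry hexit
  subst hentry
  subst hexit
  constructor
  · -- Part 1: losing provable ownership
    intro hPO
    constructor
    · -- forward: from loss derive the conditions
      intro hnPO
      rw [ProvablyOwns] at hnPO
      push_neg at hnPO
      obtain ⟨sch', hcons, hnOwn⟩ := hnPO
      rw [Owns] at hnOwn
      push_neg at hnOwn
      obtain ⟨rm, hrmc, hnvis⟩ := hnOwn
      obtain ⟨h0, hq', hen', hex'⟩ := obsHist_succ_eq σ init sch sch' t hcons
      have hrm : rm = (sch' t).2 := by
        by_contra hne
        have hc' : (prun σ sch' init t).rooms rm = c := by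
          rw [← rooms_succ_ne σ init sch' t rm hne]
          exact hrmc
        exact hnvis (visitedBy_mono _ _ _ _ (hPO sch' h0 rm hc'))
      subst hrm
      refine ⟨?_, ?_, ?_, ?_⟩
      · intro hqp
        exact hnvis ⟨t, Nat.lt_succ_self t, by rw [← hqp, ← hq']⟩
      · rw [← hex']
        exact hrmc
      · intro hc
        apply hnvis
        apply visitedBy_mono
        exact hPO sch' h0 _ (by rw [hen', ← hc])
      · intro hE
        exact hnvis (visitedBy_mono _ _ _ _ (hE sch' h0 _ hen'))
    · -- backward: conditions imply loss
      rintro ⟨hqp, hec, henc, hnE⟩ hPO1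
      rw [ProvablyOwns] at hnE
      push_neg at hnE
      obtain ⟨sch', h0, hnOwn⟩ := hnE
      rw [Owns] at hnOwn
      push_neg at hnOwn
      obtain ⟨rm, hrmE, hnvis⟩ := hnOwn
      obtain ⟨sch'', hs_t, hs_lt, hcons, hrooms⟩ := modifySch σ init sch sch' t h0 rm hrmE
      have hc' : (prun σ sch'' init (t + 1)).rooms rm = c := by
        rw [hrooms, Function.update_self]
        exact hec
      rcases (visitedBy_succ sch'' t p rm).mp (hPO1 sch'' hcons rm hc') with hv | hv
      · exact hnvis ((visitedBy_congr sch'' sch' t hs_lt p rm).mp hv)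
      · rw [hs_t] at hv
        exact hqp (congrArg Prod.fst hv)
  · -- Part 2: gaining provable ownership
    intro hnPO
    rw [ProvablyOwns] at hnPO
    push_neg at hnPO
    obtain ⟨sch', h0, hnOwn⟩ := hnPO
    rw [Owns] at hnOwn
    push_neg at hnOwn
    obtain ⟨rm, hrmc, hnvis⟩ := hnOwn
    constructor
    · -- forward: from gain derive the conditions
      intro hPO1
      have hentryc : (prun σ sch init t).rooms (sch t).2 = c := by
        by_contra hne
        have hpos : 0 < cnt (prun σ sch' init t).rooms
            ((prun σ sch init t).rooms (sch t).2) := by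
          rw [cnt_eq_of_obsHist_eq σ init sch sch' t h0]
          exact cnt_pos _ _ (sch t).2 rfl
        obtain ⟨rm', hrm'⟩ := exists_of_cnt_pos _ _ hpos
        obtain ⟨sch'', hs_t, hs_lt, hcons, hrooms⟩ := modifySch σ init sch sch' t h0 rm' hrm'
        have hrmne : rm ≠ rm' := by
          intro he
          rw [he, hrm'] at hrmc
          exact hne hrmc
        have hc' : (prun σ sch'' init (t + 1)).rooms rm = c := by
          rw [hrooms, Function.update_of_ne hrmne]
          exact hrmc
        rcases (visitedBy_succ sch'' t p rm).mp (hPO1 sch'' hcons rm hc') with hv | hv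
        · exact hnvis ((visitedBy_congr sch'' sch' t hs_lt p rm).mp hv)
        · rw [hs_t] at hv
          exact hrmne (congrArg Prod.snd hv).symm
      have huniq : ∀ rm1 : Fin r, (prun σ sch init t).rooms rm1 = c → rm1 = (sch t).2 := by
        intro rm1 hrm1
        by_contra hne
        have h2 : 1 < cnt (prun σ sch' init t).rooms c := by
          rw [cnt_eq_of_obsHist_eq σ init sch sch' t h0]
          exact cnt_two _ _ rm1 (sch t).2 hrm1 hentryc hne
        obtain ⟨rm', hrm'ne, hrm'c⟩ := exists_ne_of_cnt_two _ _ rm h2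
        have hrm'entry : (prun σ sch' init t).rooms rm'
            = (prun σ sch init t).rooms (sch t).2 := by
          rw [hrm'c, hentryc]
        obtain ⟨sch'', hs_t, hs_lt, hcons, hrooms⟩ :=
          modifySch σ init sch sch' t h0 rm' hrm'entry
        have hc' : (prun σ sch'' init (t + 1)).rooms rm = c := by
          rw [hrooms, Function.update_of_ne (Ne.symm hrm'ne)]
          exact hrmc
        rcases (visitedBy_succ sch'' t p rm).mp (hPO1 sch'' hcons rm hc') with hv | hv
        · exact hnvis ((visitedBy_congr sch'' sch' t hs_lt p rm).mp hv)
        · rw [hs_t] at hv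
          exact hrm'ne (congrArg Prod.snd hv)
      refine ⟨hentryc, huniq, ?_⟩
      by_contra hcon
      push_neg at hcon
      obtain ⟨hqp, hexc⟩ := hcon
      have hrment : (prun σ sch' init t).rooms rm
          = (prun σ sch init t).rooms (sch t).2 := by
        rw [hrmc, hentryc]
      obtain ⟨sch'', hs_t, hs_lt, hcons, hrooms⟩ := modifySch σ init sch sch' t h0 rm hrment
      have hc' : (prun σ sch'' init (t + 1)).rooms rm = c := by
        rw [hrooms, Function.update_self]
        exact hexc
      rcases (visitedBy_succ sch'' t p rm).mp (hPO1 sch'' hcons rm hc') with hv | hv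
      · exact hnvis ((visitedBy_congr sch'' sch' t hs_lt p rm).mp hv)
      · rw [hs_t] at hv
        exact hqp (congrArg Prod.fst hv)
    · -- backward: conditions imply gain
      rintro ⟨hentryc, huniq, hthird⟩
      intro sch1 hcons
      obtain ⟨h1, hq', hen', hex'⟩ := obsHist_succ_eq σ init sch sch1 t hcons
      have hcnt1 : cnt (prun σ sch1 init t).rooms c ≤ 1 := by
        rw [cnt_eq_of_obsHist_eq σ init sch sch1 t h1]
        by_contra hgt
        push_neg at hgt
        obtain ⟨j, hj, hjc⟩ := exists_ne_of_cnt_two _ _ (sch t).2 hgt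
        exact hj (huniq j hjc)
      intro rm1 hrm1
      by_cases hr : rm1 = (sch1 t).2
      · subst hr
        rw [hex'] at hrm1
        rcases hthird with hqp | hexne
        · exact ⟨t, Nat.lt_succ_self t, by rw [← hqp, ← hq']⟩
        · exact absurd hrm1 hexne
      · have ha : (prun σ sch1 init t).rooms rm1 = c := by
          rw [← rooms_succ_ne σ init sch1 t rm1 hr]
          exact hrm1
        have hb : (prun σ sch1 init t).rooms (sch1 t).2 = c := by
          rw [hen', hentryc]
        exact absurd (eq_of_cnt_le_one _ _ rm1 (sch1 t).2 ha hb hcnt1) hr
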